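/- Let Γ be a finite simple graph with no dominated vertices (Dom(Γ) = ∅) and G = G(Γ). Then: (i) Conj(G) ∩ St(K) = Conj_S(G) = {1} and Conj(G) = Conj_V(G) = Conj_N(G), and Conj(G) is a normal subgroup of St^conj(K); (ii) St(L) = St(K). -/

import Mathlib

/-!
Without dominated vertices, `𝔞(x) = cl(x) ⊆ x^⊥`, every `∼`-class is a `∼⊥`-class, both are
cliques, and no singleton is a component of `Γ_{x^⊥}`. The heart of the matter is that a
basis-conjugating automorphism conjugates a whole clique by a single element. This rests on the
centralizer of a vertex `w` being `G(w^⊥)`: mapping `G` to its HNN extension along `G(lk w)` with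
`w` sent to the stable letter, Britton's lemma shows that an element commuting with the stable
letter lies in `⟨t, G(lk w)⟩`. Retracting conjugators onto parabolic subgroups then does the rest:
an automorphism in `Conj(G) ∩ St(K)` conjugates `x` by an element of `G(𝔞(x)) ⊆ G(x^⊥)`, hence
fixes it.
-/

namespace PCG

variable {X : Type*}

/-- The orthogonal complement of a set of vertices: all vertices at distance at
most one from every element of `Y`. -/
def perp (Γ : SimpleGraph X) (Y : Set X) : Set X :=
  {u | ∀ y ∈ Y, u = y ∨ Γ.Adj u y}

/-- The closure operator `cl(Y) = Y^⊥⊥`. -/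
def cl (Γ : SimpleGraph X) (Y : Set X) : Set X :=
  perp Γ (perp Γ Y)

/-- The admissible-set operator `𝔞(Y) = ⋂_{y ∈ Y} (y^⊥ \ {y})^⊥` (with `𝔞(∅) = X`). -/
def aSet (Γ : SimpleGraph X) (Y : Set X) : Set X :=
  ⋂ y ∈ Y, perp Γ (perp Γ {y} \ {y})

/-- A set is admissible if it is `𝔞(Y)` for some `Y`. -/
def IsAdmissible (Γ : SimpleGraph X) (A : Set X) : Prop :=
  ∃ Y : Set X, A = aSet Γ Y

/-- A set is closed if it equals its closure. -/
def IsClosedSet (Γ : SimpleGraph X) (Y : Set X) : Prop :=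
  Y = cl Γ Y

/-- `x` dominates `y` if `x^⊥ ∩ y^⊥ = y^⊥ \ {y}`. -/
def Dominates (Γ : SimpleGraph X) (x y : X) : Prop :=
  perp Γ {x} ∩ perp Γ {y} = perp Γ {y} \ {y}

/-- The set of dominated vertices. -/
def Dom (Γ : SimpleGraph X) : Set X :=
  {y | ∃ x, Dominates Γ x y}

/-- The `∼⊥`-equivalence class of `x`: vertices with the same star as `x`. -/
def perpClass (Γ : SimpleGraph X) (x : X) : Set X :=
  {y | perp Γ {y} = perp Γ {x}}

/-- The `∼◇`-equivalence class of `x`: vertices with the same link as `x`. -/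
def diaClass (Γ : SimpleGraph X) (x : X) : Set X :=
  {y | perp Γ {y} \ {y} = perp Γ {x} \ {x}}

/-- The `∼`-equivalence class `[x]`. -/
def simClass (Γ : SimpleGraph X) (x : X) : Set X :=
  perpClass Γ x ∪ diaClass Γ x

/-- The outer admissible set of `y`. -/
def out (Γ : SimpleGraph X) (y : X) : Set X :=
  {x | Dominates Γ x y ∧ simClass Γ x ≠ simClass Γ y}

/-- `C` is the vertex set of a connected component of the full subgraph of `Γ` on `S`. -/
def IsCompOf (Γ : SimpleGraph X) (S : Set X) (C : Set X) : Prop :=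
  ∃ K : (Γ.induce S).ConnectedComponent, C = Subtype.val '' K.supp

/-- Balanced graphs. -/
def Balanced (Γ : SimpleGraph X) : Prop :=
  ∀ v ∈ Dom Γ, out Γ v = ∅ ∨ ∃ C : Set X, IsCompOf Γ ((perp Γ {v})ᶜ) C ∧ out Γ v ⊆ C

/-- Relators of the partially commutative group: commutators of adjacent vertices. -/
def raagRels (Γ : SimpleGraph X) : Set (FreeGroup X) :=
  {w | ∃ x y : X, Γ.Adj x y ∧
    w = FreeGroup.of x * FreeGroup.of y * (FreeGroup.of x)⁻¹ * (FreeGroup.of y)⁻¹}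

/-- The partially commutative group (right-angled Artin group) of `Γ`. -/
abbrev RAAG (Γ : SimpleGraph X) : Type _ := PresentedGroup (raagRels Γ)

/-- The generator of `RAAG Γ` corresponding to a vertex. -/
def gen (Γ : SimpleGraph X) (x : X) : RAAG Γ := PresentedGroup.of x

/-- The canonical parabolic subgroup generated by a set of vertices. -/
def parab (Γ : SimpleGraph X) (Y : Set X) : Subgroup (RAAG Γ) :=
  Subgroup.closure (gen Γ '' Y)

/-- Conjugate of a subgroup: `H^f = f⁻¹ H f`. -/
def conjBy {G : Type*} [Group G] (H : Subgroup G) (f : G) : Subgroup G :=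
  Subgroup.map (MulAut.conj f⁻¹).toMonoidHom H

/-- Inversions. -/
def InvSet (Γ : SimpleGraph X) : Set (MulAut (RAAG Γ)) :=
  {φ | ∃ x : X, φ (gen Γ x) = (gen Γ x)⁻¹ ∧ ∀ y : X, y ≠ x → φ (gen Γ y) = gen Γ y}

/-- Transvections. -/
def TrSet (Γ : SimpleGraph X) : Set (MulAut (RAAG Γ)) :=
  {φ | ∃ x y : X, y ≠ x ∧
    (φ (gen Γ x) = gen Γ x * gen Γ y ∨ φ (gen Γ x) = (gen Γ y)⁻¹ * gen Γ x) ∧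
    ∀ z : X, z ≠ x → φ (gen Γ z) = gen Γ z}

/-- Elementary conjugating automorphisms. -/
def LInnSet (Γ : SimpleGraph X) : Set (MulAut (RAAG Γ)) :=
  {φ | ∃ (x : X) (C : Set X) (ε : ℤ), (ε = 1 ∨ ε = -1) ∧
    IsCompOf Γ ((perp Γ {x})ᶜ) C ∧
    (∀ u ∈ C, φ (gen Γ u) = (gen Γ x ^ ε)⁻¹ * gen Γ u * gen Γ x ^ ε) ∧
    (∀ u : X, u ∉ C → φ (gen Γ u) = gen Γ u)}

/-- The subgroup `Aut*(G)` generated by inversions, transvections and elementary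
conjugating automorphisms. -/
def AutStar (Γ : SimpleGraph X) : Subgroup (MulAut (RAAG Γ)) :=
  Subgroup.closure (InvSet Γ ∪ TrSet Γ ∪ LInnSet Γ)

/-- Basis-conjugating automorphisms. -/
def IsBasisConj (Γ : SimpleGraph X) (φ : MulAut (RAAG Γ)) : Prop :=
  ∀ x : X, ∃ g : RAAG Γ, φ (gen Γ x) = g⁻¹ * gen Γ x * g

/-- Normal conjugating automorphisms. -/
def IsConjN (Γ : SimpleGraph X) (φ : MulAut (RAAG Γ)) : Prop :=
  IsBasisConj Γ φ ∧
    ∀ x : X, ∃ f : RAAG Γ, ∀ z ∈ aSet Γ {x}, φ (gen Γ z) = f⁻¹ * gen Γ z * f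

/-- Vertex conjugating automorphisms. -/
def IsConjV (Γ : SimpleGraph X) (φ : MulAut (RAAG Γ)) : Prop :=
  IsBasisConj Γ φ ∧
    ∀ x : X, ∃ f : RAAG Γ, ∀ y ∈ simClass Γ x, φ (gen Γ y) = f⁻¹ * gen Γ y * f

/-- Membership in `St(K)`. -/
def IsStK (Γ : SimpleGraph X) (φ : MulAut (RAAG Γ)) : Prop :=
  ∀ A : Set X, IsAdmissible Γ A →
    Subgroup.map φ.toMonoidHom (parab Γ A) = parab Γ A

/-- Membership in `St(L)`. -/
def IsStL (Γ : SimpleGraph X) (φ : MulAut (RAAG Γ)) : Prop :=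
  ∀ A : Set X, IsClosedSet Γ A →
    Subgroup.map φ.toMonoidHom (parab Γ A) = parab Γ A

/-- Membership in `St^conj(K)`. -/
def IsStConjK (Γ : SimpleGraph X) (φ : MulAut (RAAG Γ)) : Prop :=
  ∀ A : Set X, IsAdmissible Γ A →
    ∃ f : RAAG Γ, Subgroup.map φ.toMonoidHom (parab Γ A) = conjBy (parab Γ A) f

/-- Aggregate conjugating automorphisms. -/
def AggrSet (Γ : SimpleGraph X) : Set (MulAut (RAAG Γ)) :=
  {φ | ∃ (x : X) (C : Set X), IsCompOf Γ ({x}ᶜ) C ∧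
    (∀ y ∈ C, φ (gen Γ y) = (gen Γ x)⁻¹ * gen Γ y * gen Γ x) ∧
    (∀ y : X, y ∉ C → φ (gen Γ y) = gen Γ y)}

/-- Elementary singular conjugating automorphisms: those `α_{C,x^ε}` with `C` a singleton. -/
def LInnSSet (Γ : SimpleGraph X) : Set (MulAut (RAAG Γ)) :=
  {φ | ∃ (x y : X) (ε : ℤ), (ε = 1 ∨ ε = -1) ∧
    IsCompOf Γ ((perp Γ {x})ᶜ) {y} ∧
    φ (gen Γ y) = (gen Γ x ^ ε)⁻¹ * gen Γ y * gen Γ x ^ ε ∧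
    ∀ u : X, u ≠ y → φ (gen Γ u) = gen Γ u}

/-- Basic collected conjugating automorphisms. -/
def LInnCSet (Γ : SimpleGraph X) : Set (MulAut (RAAG Γ)) :=
  {φ | ∃ x u : X, Dominates Γ x u ∧
    (∀ v ∈ simClass Γ u \ {x}, φ (gen Γ v) = (gen Γ x)⁻¹ * gen Γ v * gen Γ x) ∧
    (∀ v : X, v ∉ simClass Γ u \ {x} → φ (gen Γ v) = gen Γ v)}

/-- Regular elementary conjugating automorphisms. -/
def LInnRSet (Γ : SimpleGraph X) : Set (MulAut (RAAG Γ)) :=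
  (LInnSet Γ ∩ {φ | IsConjV Γ φ}) \ LInnSSet Γ

/-- Basic vertex conjugating automorphisms. -/
def LInnVSet (Γ : SimpleGraph X) : Set (MulAut (RAAG Γ)) :=
  LInnRSet Γ ∪ LInnCSet Γ

/-- Tame extended elementary conjugating automorphisms. -/
def LInnTSet (Γ : SimpleGraph X) : Set (MulAut (RAAG Γ)) :=
  {φ | ∃ (y : X) (L : Set X) (ε : ℤ), (ε = 1 ∨ ε = -1) ∧
    (∀ v ∈ L, ∃ C : Set X, IsCompOf Γ ((perp Γ {y})ᶜ) C ∧ v ∈ C ∧ C ⊆ L) ∧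
    aSet Γ {y} ∩ L = ∅ ∧
    (∀ u ∈ L, φ (gen Γ u) = (gen Γ y ^ ε)⁻¹ * gen Γ u * gen Γ y ^ ε) ∧
    (∀ u : X, u ∉ L → φ (gen Γ u) = gen Γ u)}

/-- `K`-minimal vertices. -/
def KMin (Γ : SimpleGraph X) (x : X) : Prop :=
  ∀ y : X, aSet Γ {y} ⊆ aSet Γ {x} → aSet Γ {y} = aSet Γ {x}

/-- `L`-minimal vertices. -/
def LMin (Γ : SimpleGraph X) (x : X) : Prop :=
  ∀ y : X, cl Γ {y} ⊆ cl Γ {x} → cl Γ {y} = cl Γ {x}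

end PCG

namespace PCG

section Graph

variable {X : Type*} {Γ : SimpleGraph X}

lemma mem_perp_singleton {u y : X} : u ∈ perp Γ {y} ↔ u = y ∨ Γ.Adj u y := by
  simp [perp]

lemma self_mem_perp (y : X) : y ∈ perp Γ {y} := mem_perp_singleton.2 (Or.inl rfl)

lemma mem_perp_singleton_comm {u y : X} : u ∈ perp Γ {y} ↔ y ∈ perp Γ {u} := by
  simp only [mem_perp_singleton, eq_comm, Γ.adj_comm]

lemma perp_antitone {A B : Set X} (h : A ⊆ B) : perp Γ B ⊆ perp Γ A :=
  fun _ hu y hy => hu y (h hy)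

lemma perp_insert (b : X) (S : Set X) : perp Γ (insert b S) = perp Γ {b} ∩ perp Γ S := by
  ext u
  simp [perp]

lemma subset_cl (Y : Set X) : Y ⊆ cl Γ Y := fun y hy w hw => by
  rcases hw y hy with rfl | h
  exacts [Or.inl rfl, Or.inr h.symm]

lemma cl_mono {A B : Set X} (h : A ⊆ B) : cl Γ A ⊆ cl Γ B :=
  perp_antitone (perp_antitone h)

lemma cl_perp (S : Set X) : cl Γ (perp Γ S) = perp Γ S :=
  (perp_antitone (subset_cl S)).antisymm (subset_cl _)

lemma cl_singleton_subset_perp (x : X) : cl Γ {x} ⊆ perp Γ {x} :=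
  fun _ hu => mem_perp_singleton.2 (hu x (self_mem_perp x))

lemma isClique_cl_singleton (x : X) : Γ.IsClique (cl Γ {x}) := fun _ hu v hv huv =>
  (hu v (cl_singleton_subset_perp x hv)).resolve_left huv

lemma isClique_perpClass (x : X) : Γ.IsClique (perpClass Γ x) := fun u hu v hv huv => by
  have : v ∈ perp Γ {u} := (hu : perp Γ {u} = _) ▸ (hv : perp Γ {v} = _) ▸ self_mem_perp v
  exact ((mem_perp_singleton.1 this).resolve_left huv.symm).symm

lemma aSet_eq_perp_biUnion (Y : Set X) :
    aSet Γ Y = perp Γ (⋃ y ∈ Y, perp Γ {y} \ {y}) := by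
  ext u
  simp only [aSet, perp, Set.mem_iInter, Set.mem_iUnion]
  grind

lemma isClosedSet_aSet (Y : Set X) : IsClosedSet Γ (aSet Γ Y) := by
  rw [IsClosedSet, aSet_eq_perp_biUnion, cl_perp]

lemma aSet_singleton (x : X) : aSet Γ {x} = perp Γ (perp Γ {x} \ {x}) := by
  simp [aSet]

lemma cl_singleton_subset_aSet (x : X) : cl Γ {x} ⊆ aSet Γ {x} := by
  rw [aSet_singleton]
  exact perp_antitone Set.sdiff_subset

lemma mem_aSet_self (x : X) : x ∈ aSet Γ {x} :=
  cl_singleton_subset_aSet x (subset_cl {x} rfl)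

lemma dominates_iff {x y : X} :
    Dominates Γ x y ↔ y ∉ perp Γ {x} ∧ perp Γ {y} \ {y} ⊆ perp Γ {x} := by
  constructor
  · intro h
    refine ⟨fun hy => ?_, fun v hv => (h.symm ▸ hv : v ∈ perp Γ {x} ∩ perp Γ {y}).1⟩
    have : y ∈ perp Γ {y} \ {y} := h ▸ ⟨hy, self_mem_perp y⟩
    exact this.2 rfl
  · rintro ⟨hy, hlink⟩
    ext v
    refine ⟨fun hv => ⟨hv.2, ?_⟩, fun hv => ⟨hlink hv, hv.1⟩⟩
    rintro rfl
    exact hy hv.1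

lemma IsCompOf.subset {S C : Set X} (hC : IsCompOf Γ S C) : C ⊆ S := by
  obtain ⟨K, rfl⟩ := hC
  rintro _ ⟨v, -, rfl⟩
  exact v.2

lemma IsCompOf.mem_of_adj {S C : Set X} (hC : IsCompOf Γ S C) {u v : X} (hu : u ∈ C)
    (hv : v ∈ S) (h : Γ.Adj u v) : v ∈ C := by
  obtain ⟨K, rfl⟩ := hC
  obtain ⟨u', hu', rfl⟩ := hu
  refine ⟨⟨v, hv⟩, ?_, rfl⟩
  rw [SimpleGraph.ConnectedComponent.mem_supp_iff] at hu' ⊢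
  rw [← hu']
  exact (SimpleGraph.ConnectedComponent.connectedComponentMk_eq_of_adj
    (G := Γ.induce S) (show (Γ.induce S).Adj u' ⟨v, hv⟩ from h)).symm

lemma mem_perp_of_link_subset (hdom : Dom Γ = ∅) {x y : X} (h : perp Γ {y} \ {y} ⊆ perp Γ {x}) :
    y ∈ perp Γ {x} := by
  by_contra hy
  have : y ∈ Dom Γ := ⟨x, dominates_iff.2 ⟨hy, h⟩⟩
  rwa [hdom] at this

lemma aSet_singleton_eq_cl (hdom : Dom Γ = ∅) (x : X) : aSet Γ {x} = cl Γ {x} := by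
  refine Set.Subset.antisymm (fun u hu => ?_) (cl_singleton_subset_aSet x)
  rw [aSet_singleton] at hu
  have hux : u ∈ perp Γ {x} := mem_perp_singleton_comm.1 <|
    mem_perp_of_link_subset hdom fun v hv =>
      mem_perp_singleton_comm.1 (mem_perp_singleton.2 (hu v hv))
  intro v hv
  by_cases hvx : v = x
  · exact hvx ▸ mem_perp_singleton.1 hux
  · exact hu v ⟨hv, hvx⟩

lemma simClass_subset_perpClass (hdom : Dom Γ = ∅) (x : X) : simClass Γ x ⊆ perpClass Γ x := by
  rintro y (hy | hy)
  · exact hy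
  have hyx : y ∈ perp Γ {x} := mem_perp_of_link_subset hdom (hy ▸ Set.sdiff_subset)
  rcases mem_perp_singleton.1 hyx with rfl | hadj
  · rfl
  · have : x ∈ perp Γ {x} \ {x} := hy ▸ ⟨mem_perp_singleton.2 (Or.inr hadj.symm), hadj.ne.symm⟩
    exact absurd rfl this.2

lemma LInnSSet_eq_empty (hdom : Dom Γ = ∅) : LInnSSet Γ = ∅ := by
  refine Set.eq_empty_of_forall_notMem ?_
  rintro φ ⟨x, y, -, -, hC, -, -⟩
  refine hC.subset rfl (mem_perp_of_link_subset hdom fun v ⟨hv, hvy⟩ => ?_)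
  by_contra hvx
  exact hvy (hC.mem_of_adj rfl hvx ((mem_perp_singleton.1 hv).resolve_left hvy).symm)

end Graph

section Parabolic

variable {X : Type*} {Γ : SimpleGraph X}

lemma gen_commute_of_adj {x y : X} (h : Γ.Adj x y) : Commute (gen Γ x) (gen Γ y) := by
  have hrel := PresentedGroup.one_of_mem (rels := raagRels Γ) ⟨x, y, h, rfl⟩
  simp only [map_mul, map_inv] at hrel
  exact mul_inv_eq_iff_eq_mul.1 (mul_inv_eq_one.1 hrel)

lemma gen_commute_of_mem_perp {x y : X} (h : x ∈ perp Γ {y}) : Commute (gen Γ x) (gen Γ y) := by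
  rcases mem_perp_singleton.1 h with rfl | hxy
  exacts [Commute.refl _, gen_commute_of_adj hxy]

lemma hom_ext_gen {H : Type*} [Group H] {f g : RAAG Γ →* H}
    (h : ∀ x, f (gen Γ x) = g (gen Γ x)) : f = g :=
  PresentedGroup.ext h

lemma mulAut_eq_one_of_gen {φ : MulAut (RAAG Γ)} (h : ∀ x, φ (gen Γ x) = gen Γ x) : φ = 1 :=
  MulEquiv.toMonoidHom_injective (hom_ext_gen (g := MonoidHom.id _) h)

def raagLift {H : Type*} [Group H] (f : X → H)
    (hf : ∀ x y, Γ.Adj x y → Commute (f x) (f y)) : RAAG Γ →* H :=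
  PresentedGroup.toGroup (f := f) (by
    rintro r ⟨x, y, hxy, rfl⟩
    simp [(hf x y hxy).eq])

@[simp]
lemma raagLift_gen {H : Type*} [Group H] (f : X → H)
    (hf : ∀ x y, Γ.Adj x y → Commute (f x) (f y)) (x : X) :
    raagLift f hf (gen Γ x) = f x :=
  PresentedGroup.toGroup.of _

lemma gen_mem_parab {A : Set X} {x : X} (h : x ∈ A) : gen Γ x ∈ parab Γ A :=
  Subgroup.subset_closure ⟨x, h, rfl⟩

lemma parab_mono {A B : Set X} (h : A ⊆ B) : parab Γ A ≤ parab Γ B :=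
  Subgroup.closure_mono (Set.image_mono h)

lemma parab_univ : parab Γ Set.univ = ⊤ := by
  rw [parab, Set.image_univ]
  exact PresentedGroup.closure_range_of _

lemma parab_biUnion {ι : Type*} (I : Set ι) (A : ι → Set X) :
    parab Γ (⋃ i ∈ I, A i) = ⨆ i ∈ I, parab Γ (A i) := by
  simp only [parab, Set.image_iUnion₂, Subgroup.closure_iUnion]

lemma eqOn_parab {H : Type*} [Group H] {f g : RAAG Γ →* H} {A : Set X}
    (h : ∀ x ∈ A, f (gen Γ x) = g (gen Γ x)) {y : RAAG Γ} (hy : y ∈ parab Γ A) :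
    f y = g y :=
  MonoidHom.eqOn_closure (by rintro _ ⟨x, hx, rfl⟩; exact h x hx) hy

lemma commute_gen_of_mem_parab {A : Set X} {x : X} (hA : A ⊆ perp Γ {x}) {g : RAAG Γ}
    (hg : g ∈ parab Γ A) : Commute g (gen Γ x) := by
  induction hg using Subgroup.closure_induction with
  | mem g hg =>
    obtain ⟨u, hu, rfl⟩ := hg
    exact gen_commute_of_mem_perp (hA hu)
  | one => exact Commute.one_left _
  | mul a b _ _ ha hb => exact ha.mul_left hb
  | inv a _ ha => exact ha.inv_left

open Classical in
noncomputable def retract (Γ : SimpleGraph X) (A : Set X) : RAAG Γ →* RAAG Γ :=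
  raagLift (fun x => if x ∈ A then gen Γ x else 1) fun x y h => by
    by_cases hx : x ∈ A <;> by_cases hy : y ∈ A <;> simp [hx, hy, gen_commute_of_adj h]

lemma retract_gen_of_mem {A : Set X} {x : X} (h : x ∈ A) : retract Γ A (gen Γ x) = gen Γ x :=
  (raagLift_gen _ _ x).trans (if_pos h)

lemma retract_gen_of_notMem {A : Set X} {x : X} (h : x ∉ A) : retract Γ A (gen Γ x) = 1 :=
  (raagLift_gen _ _ x).trans (if_neg h)

lemma retract_mem_parab (A : Set X) (g : RAAG Γ) : retract Γ A g ∈ parab Γ A := by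
  refine PresentedGroup.generated_by _ ((parab Γ A).comap (retract Γ A)) (fun x => ?_) g
  change retract Γ A (gen Γ x) ∈ parab Γ A
  by_cases hx : x ∈ A
  · exact (retract_gen_of_mem hx).symm ▸ gen_mem_parab hx
  · exact (retract_gen_of_notMem hx).symm ▸ one_mem _

lemma retract_eq_self_iff {A : Set X} {g : RAAG Γ} : retract Γ A g = g ↔ g ∈ parab Γ A := by
  refine ⟨fun h => h ▸ retract_mem_parab A g, fun hg => ?_⟩
  exact eqOn_parab (g := MonoidHom.id _) (fun x hx => retract_gen_of_mem hx) hg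

lemma retract_comp_retract (A B : Set X) :
    (retract Γ A).comp (retract Γ B) = retract Γ (A ∩ B) := by
  refine hom_ext_gen fun x => ?_
  by_cases hB : x ∈ B
  · by_cases hA : x ∈ A
    · simp [retract_gen_of_mem, hA, hB]
    · simp [retract_gen_of_mem hB, retract_gen_of_notMem, hA]
  · simp [retract_gen_of_notMem, hB]

lemma parab_inter (A B : Set X) : parab Γ (A ∩ B) = parab Γ A ⊓ parab Γ B := by
  refine le_antisymm (le_inf (parab_mono Set.inter_subset_left)
    (parab_mono Set.inter_subset_right)) fun g ⟨hA, hB⟩ => ?_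
  rw [← retract_eq_self_iff, ← retract_comp_retract, MonoidHom.comp_apply,
    retract_eq_self_iff.2 hB, retract_eq_self_iff.2 hA]

lemma conj_gen_eq_conj_retract {A : Set X} {x : X} {g : RAAG Γ} (hx : x ∈ A)
    (h : g⁻¹ * gen Γ x * g ∈ parab Γ A) :
    g⁻¹ * gen Γ x * g = (retract Γ A g)⁻¹ * gen Γ x * retract Γ A g := by
  rw [← retract_eq_self_iff.2 h, map_mul, map_mul, map_inv, retract_gen_of_mem hx]

end Parabolic

section HNN

open HNNExtension HNNExtension.NormalWord

variable {G : Type*} [Group G] {K : Subgroup G}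

abbrev HNNRefl (K : Subgroup G) : Type _ := HNNExtension G K K (MulEquiv.refl K)

lemma toSubgroup_self (K : Subgroup G) (u : ℤˣ) : toSubgroup K K u = K := by
  rcases Int.units_eq_one_or u with rfl | rfl <;> rfl

lemma t_commute_of_mem {k : G} (hk : k ∈ K) : Commute (t : HNNRefl K) (of k) := by
  have := t_mul_of (φ := MulEquiv.refl K) ⟨k, hk⟩
  simp only [MulEquiv.refl_apply] at this
  exact this

lemma exists_reducedWord_prod_eq (c : HNNRefl K) :
    ∃ w : ReducedWord G K K, w.prod (MulEquiv.refl K) = c := by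
  obtain ⟨d⟩ := TransversalPair.nonempty G K K
  exact ⟨(NormalWord.equiv _ d c).toReducedWord, (NormalWord.equiv _ d).symm_apply_apply c⟩

/-- Compare the reduced words `t ^ u * c` and `c * t ^ u`, with `u` the exponent of the last
letter of `c` so that appending `t ^ u` keeps the word reduced: their heads `1` and `w.head` must
agree modulo `K`. -/
lemma ReducedWord.head_mem_of_commute_t (w : ReducedWord G K K)
    (hc : Commute (w.prod (MulEquiv.refl K)) t) : w.head ∈ K := by
  by_contra hh
  set u : ℤˣ := (w.toList.getLast?.map Prod.fst).getD 1 with hu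
  let w₁ : ReducedWord G K K := ⟨1, (u, w.head) :: w.toList, List.isChain_cons.2
    ⟨fun _ _ hmem => absurd (by simpa [toSubgroup_self] using hmem) hh, w.chain⟩⟩
  let w₂ : ReducedWord G K K := ⟨w.head, w.toList ++ [(u, 1)], List.isChain_append.2
    ⟨w.chain, List.isChain_singleton _, fun p hp y hy _ => by
      simp only [List.head?_cons, Option.mem_def, Option.some.injEq] at hy
      simp [← hy, hu, Option.mem_def.1 hp]⟩⟩
  have hprod : w₁.prod (MulEquiv.refl K) = w₂.prod (MulEquiv.refl K) :=
    calc w₁.prod (MulEquiv.refl K) = t ^ (u : ℤ) * w.prod (MulEquiv.refl K) := by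
          simp [w₁, ReducedWord.prod, mul_assoc]
      _ = w.prod (MulEquiv.refl K) * t ^ (u : ℤ) := (hc.zpow_right _).eq.symm
      _ = w₂.prod (MulEquiv.refl K) := by simp [w₂, ReducedWord.prod, mul_assoc]
  have := (ReducedWord.map_fst_eq_and_of_prod_eq _ hprod).2 u (by simp [w₁])
  simp [w₁, w₂, toSubgroup_self] at this
  exact hh this

theorem mem_closure_of_commute_t {c : HNNRefl K} (hc : Commute c t) :
    c ∈ Subgroup.closure (insert t (of '' (K : Set G))) := by
  have ht : (t : HNNRefl K) ∈ Subgroup.closure (insert t (of '' (K : Set G))) :=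
    Subgroup.subset_closure (Set.mem_insert _ _)
  have hof {k : G} (hk : k ∈ K) : (of k : HNNRefl K) ∈
      Subgroup.closure (insert t (of '' (K : Set G))) :=
    Subgroup.subset_closure (Set.mem_insert_of_mem _ ⟨k, hk, rfl⟩)
  obtain ⟨⟨g, L, hL⟩, rfl⟩ := exists_reducedWord_prod_eq c
  induction L generalizing g with
  | nil =>
    have hg := ReducedWord.head_mem_of_commute_t _ hc
    simpa [ReducedWord.prod] using hof hg
  | cons q L ih =>
    have hg : g ∈ K := ReducedWord.head_mem_of_commute_t _ hc
    set c' : HNNRefl K := (⟨q.2, L, (List.isChain_cons.1 hL).2⟩ : ReducedWord G K K).prod _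
    have hdecomp : (⟨g, q :: L, hL⟩ : ReducedWord G K K).prod (MulEquiv.refl K) =
        of g * t ^ (q.1 : ℤ) * c' := by
      simp [c', ReducedWord.prod, mul_assoc]
    have hlead : Commute (of g * t ^ (q.1 : ℤ) : HNNRefl K) t :=
      (t_commute_of_mem hg).symm.mul_left ((Commute.refl _).zpow_left _)
    have hc' : Commute c' t := by
      have : c' = (of g * t ^ (q.1 : ℤ))⁻¹ * (⟨g, q :: L, hL⟩ : ReducedWord G K K).prod _ := by
        rw [hdecomp]
        group
      exact this ▸ hlead.inv_left.mul_left hc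
    rw [hdecomp]
    exact mul_mem (mul_mem (hof hg) (zpow_mem ht _)) (ih q.2 _ hc')

end HNN

section Centralizer

open HNNExtension

variable {X : Type*} {Γ : SimpleGraph X}

open Classical in
/-- `w` goes to the stable letter of the HNN extension of `RAAG Γ` itself along `G(lk w)`. This
is not an isomorphism, but `fromHNN` is a left inverse, which suffices for centralizers. -/
noncomputable def toHNN (Γ : SimpleGraph X) (w : X) :
    RAAG Γ →* HNNRefl (parab Γ (perp Γ {w} \ {w})) :=
  raagLift (fun x => if x = w then t else of (gen Γ x)) fun x y h => by
    have hlink {v u : X} (h : Γ.Adj v u) (hv : v = w) : gen Γ u ∈ parab Γ (perp Γ {w} \ {w}) :=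
      gen_mem_parab ⟨mem_perp_singleton.2 (Or.inr (hv ▸ h.symm)), fun hu => h.ne (hv.trans hu.symm)⟩
    by_cases hx : x = w <;> by_cases hy : y = w <;> simp only [hx, hy, if_true, if_false]
    · exact absurd (hx.trans hy.symm) h.ne
    · exact t_commute_of_mem (hlink h hx)
    · exact (t_commute_of_mem (hlink h.symm hy)).symm
    · exact (gen_commute_of_adj h).map of

noncomputable def fromHNN (Γ : SimpleGraph X) (w : X) :
    HNNRefl (parab Γ (perp Γ {w} \ {w})) →* RAAG Γ :=
  lift (MonoidHom.id _) (gen Γ w) fun a =>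
    (commute_gen_of_mem_parab (fun _ hu => hu.1) a.2).symm.eq

@[simp]
lemma fromHNN_t (w : X) : fromHNN Γ w t = gen Γ w := lift_t _ _ _

@[simp]
lemma fromHNN_of (w : X) (g : RAAG Γ) : fromHNN Γ w (of g) = g := lift_of _ _ _ _

lemma fromHNN_toHNN (w : X) (c : RAAG Γ) : fromHNN Γ w (toHNN Γ w c) = c := by
  suffices (fromHNN Γ w).comp (toHNN Γ w) = MonoidHom.id _ from DFunLike.congr_fun this c
  refine hom_ext_gen fun x => ?_
  by_cases hx : x = w
  · subst hx
    simp [toHNN]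
  · simp [toHNN, hx]

theorem mem_parab_perp_of_commute {w : X} {c : RAAG Γ} (hc : Commute c (gen Γ w)) :
    c ∈ parab Γ (perp Γ {w}) := by
  have hct : Commute (toHNN Γ w c) t := by
    simpa [toHNN] using hc.map (toHNN Γ w)
  have hle : Subgroup.closure (insert t (of '' (parab Γ (perp Γ {w} \ {w}) : Set (RAAG Γ)))) ≤
      (parab Γ (perp Γ {w})).comap (fromHNN Γ w) := by
    rw [Subgroup.closure_le]
    rintro _ (rfl | ⟨k, hk, rfl⟩)
    · simpa using gen_mem_parab (self_mem_perp w)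
    · simpa using parab_mono Set.sdiff_subset hk
  simpa [fromHNN_toHNN] using hle (mem_closure_of_commute_t hct)

lemma mem_parab_perp_of_forall_commute {S : Set X} (hS : S.Finite) {c : RAAG Γ}
    (hc : ∀ z ∈ S, Commute c (gen Γ z)) : c ∈ parab Γ (perp Γ S) := by
  induction S, hS using Set.Finite.induction_on with
  | empty => simp [perp, parab_univ]
  | @insert a S _ _ ih =>
    rw [perp_insert, parab_inter]
    exact ⟨mem_parab_perp_of_commute (hc a (Set.mem_insert a S)),
      ih fun z hz => hc z (Set.mem_insert_of_mem a hz)⟩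

end Centralizer

section Conjugating

variable {X : Type*} {Γ : SimpleGraph X} {φ : MulAut (RAAG Γ)}

/-- `f * φ a * f⁻¹` commutes with `S`, so lies in `G(S^⊥)`; retracting its conjugator onto
`G(S^⊥)` gives one that commutes with `S`. -/
lemma IsBasisConj.exists_conj_insert (hφ : IsBasisConj Γ φ) {a : X} {S : Set X} (hS : S.Finite)
    (ha : ∀ z ∈ S, Γ.Adj a z) {f : RAAG Γ} (hf : ∀ z ∈ S, φ (gen Γ z) = f⁻¹ * gen Γ z * f) :
    ∃ f' : RAAG Γ, ∀ z ∈ insert a S, φ (gen Γ z) = f'⁻¹ * gen Γ z * f' := by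
  obtain ⟨g, hg⟩ := hφ a
  set r := g * f⁻¹ with hr
  have hconj : f * φ (gen Γ a) * f⁻¹ = r⁻¹ * gen Γ a * r := by
    rw [hg, hr]
    group
  have hcomm : ∀ z ∈ S, Commute (r⁻¹ * gen Γ a * r) (gen Γ z) := fun z hz => by
    have := (Commute.conj_iff f).2 ((gen_commute_of_adj (ha z hz)).map φ)
    rwa [hconj, hf z hz, show f * (f⁻¹ * gen Γ z * f) * f⁻¹ = gen Γ z by group] at this
  have hperp : r⁻¹ * gen Γ a * r ∈ parab Γ (perp Γ S) :=
    mem_parab_perp_of_forall_commute hS hcomm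
  set k := retract Γ (perp Γ S) r
  have hk : ∀ z ∈ S, Commute k (gen Γ z) := fun z hz =>
    commute_gen_of_mem_parab (perp_antitone (Set.singleton_subset_iff.2 hz))
      (retract_mem_parab _ r)
  refine ⟨k * f, ?_⟩
  rintro z (rfl | hz)
  · have haS : z ∈ perp Γ S := fun y hy => Or.inr (ha y hy)
    calc φ (gen Γ z) = f⁻¹ * (f * φ (gen Γ z) * f⁻¹) * f := by group
      _ = f⁻¹ * (k⁻¹ * gen Γ z * k) * f := by rw [hconj, conj_gen_eq_conj_retract haS hperp]
      _ = (k * f)⁻¹ * gen Γ z * (k * f) := by group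
  · have hkz : k⁻¹ * gen Γ z * k = gen Γ z := by
      rw [(hk z hz).inv_left.eq, inv_mul_cancel_right]
    calc φ (gen Γ z) = f⁻¹ * (k⁻¹ * gen Γ z * k) * f := by rw [hkz, hf z hz]
      _ = (k * f)⁻¹ * gen Γ z * (k * f) := by group

theorem IsBasisConj.exists_conj_eq_of_isClique (hφ : IsBasisConj Γ φ) {S : Set X}
    (hS : S.Finite) (hcl : Γ.IsClique S) :
    ∃ f : RAAG Γ, ∀ z ∈ S, φ (gen Γ z) = f⁻¹ * gen Γ z * f := by
  induction S, hS using Set.Finite.induction_on with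
  | empty => exact ⟨1, by simp⟩
  | @insert a S haS hS ih =>
    obtain ⟨f, hf⟩ := ih (hcl.subset (Set.subset_insert a S))
    exact hφ.exists_conj_insert hS (fun z hz => hcl (Set.mem_insert a S)
      (Set.mem_insert_of_mem a hz) (ne_of_mem_of_not_mem hz haS).symm) hf

lemma IsBasisConj.isConjV [Finite X] (hdom : Dom Γ = ∅) (hφ : IsBasisConj Γ φ) :
    IsConjV Γ φ :=
  ⟨hφ, fun x => hφ.exists_conj_eq_of_isClique (Set.toFinite _)
    ((isClique_perpClass x).subset (simClass_subset_perpClass hdom x))⟩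

lemma IsBasisConj.isConjN [Finite X] (hdom : Dom Γ = ∅) (hφ : IsBasisConj Γ φ) :
    IsConjN Γ φ :=
  ⟨hφ, fun x => hφ.exists_conj_eq_of_isClique (Set.toFinite _)
    (aSet_singleton_eq_cl hdom x ▸ isClique_cl_singleton x)⟩

lemma map_eq_conj_of_mem_parab {A : Set X} {h : RAAG Γ}
    (hA : ∀ z ∈ A, φ (gen Γ z) = h⁻¹ * gen Γ z * h) {a : RAAG Γ} (ha : a ∈ parab Γ A) :
    φ a = h⁻¹ * a * h :=
  eqOn_parab (f := φ.toMonoidHom) (g := (MulAut.conj h⁻¹).toMonoidHom)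
    (fun z hz => by simpa using hA z hz) ha |>.trans (by simp)

lemma gen_mem_map_parab_aSet {ψ : MulAut (RAAG Γ)} (x : X) :
    ψ (gen Γ x) ∈ (parab Γ (aSet Γ {x})).map ψ.toMonoidHom :=
  Subgroup.mem_map_of_mem _ (gen_mem_parab (mem_aSet_self x))

theorem IsConjN.isBasisConj_conj_of_isStConjK (hφ : IsConjN Γ φ) {ψ : MulAut (RAAG Γ)}
    (hψ : IsStConjK Γ ψ) : IsBasisConj Γ (ψ⁻¹ * φ * ψ) := by
  intro x
  obtain ⟨f, hf⟩ := hψ _ ⟨{x}, rfl⟩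
  obtain ⟨h, hh⟩ := hφ.2 x
  obtain ⟨a, ha, hax⟩ := hf ▸ gen_mem_map_parab_aSet (ψ := ψ) x
  replace hax : ψ (gen Γ x) = f⁻¹ * a * f := by simpa [MulAut.conj_apply] using hax.symm
  refine ⟨ψ⁻¹ (f⁻¹ * h * φ f), ?_⟩
  have hkey : φ (ψ (gen Γ x)) = (f⁻¹ * h * φ f)⁻¹ * ψ (gen Γ x) * (f⁻¹ * h * φ f) := by
    rw [hax, map_mul, map_mul, map_inv, map_eq_conj_of_mem_parab hh ha]
    group
  simp [MulAut.mul_apply, hkey]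

theorem isBasisConj_and_isStK_iff (hdom : Dom Γ = ∅) :
    IsBasisConj Γ φ ∧ IsStK Γ φ ↔ φ = 1 := by
  refine ⟨fun ⟨hφ, hK⟩ => mulAut_eq_one_of_gen fun x => ?_, ?_⟩
  · obtain ⟨g, hg⟩ := hφ x
    have hmem : g⁻¹ * gen Γ x * g ∈ parab Γ (aSet Γ {x}) :=
      hg ▸ hK _ ⟨{x}, rfl⟩ ▸ gen_mem_map_parab_aSet x
    have hcomm : Commute (retract Γ (aSet Γ {x}) g) (gen Γ x) :=
      commute_gen_of_mem_parab (aSet_singleton_eq_cl hdom x ▸ cl_singleton_subset_perp x)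
        (retract_mem_parab _ g)
    rw [hg, conj_gen_eq_conj_retract (mem_aSet_self x) hmem, hcomm.inv_left.eq]
    group
  · rintro rfl
    exact ⟨fun x => ⟨1, by simp⟩, fun A _ => Subgroup.map_id _⟩

/-- A closed set `C` is the union of the admissible sets `𝔞(z) = cl(z)`, `z ∈ C`. -/
theorem isStL_iff_isStK (hdom : Dom Γ = ∅) : IsStL Γ φ ↔ IsStK Γ φ := by
  refine ⟨fun hL A ⟨Y, hA⟩ => hL A (hA ▸ isClosedSet_aSet Y), fun hK C hC => ?_⟩
  have hcover : C = ⋃ z ∈ C, aSet Γ {z} := by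
    refine Set.Subset.antisymm (fun z hz => Set.mem_biUnion hz (mem_aSet_self z)) ?_
    refine Set.iUnion₂_subset fun z hz => ?_
    rw [aSet_singleton_eq_cl hdom, hC]
    exact cl_mono (Set.singleton_subset_iff.2 hz)
  rw [hcover, parab_biUnion, Subgroup.map_iSup]
  simp_rw [Subgroup.map_iSup]
  exact iSup_congr fun z => iSup_congr fun _ => hK _ ⟨{z}, rfl⟩

end Conjugating

/-- If `Γ` has no dominated vertices then:
(i) `Conj(G) ∩ St(K) = Conj_S(G) = {1}`, `Conj(G) = Conj_V(G) = Conj_N(G)`, and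
`Conj(G)` is normal in `St^conj(K)`; (ii) `St(L) = St(K)`. -/
theorem noDominated_consequences {X : Type*} [Fintype X] (Γ : SimpleGraph X)
    (hdom : Dom Γ = ∅) :
    (∀ φ : MulAut (RAAG Γ),
      (IsBasisConj Γ φ ∧ IsStK Γ φ) ↔ φ ∈ Subgroup.closure (LInnSSet Γ)) ∧
    Subgroup.closure (LInnSSet Γ) = (⊥ : Subgroup (MulAut (RAAG Γ))) ∧
    (∀ φ : MulAut (RAAG Γ), IsBasisConj Γ φ ↔ IsConjV Γ φ) ∧
    (∀ φ : MulAut (RAAG Γ), IsBasisConj Γ φ ↔ IsConjN Γ φ) ∧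
    (∀ φ ψ : MulAut (RAAG Γ), IsBasisConj Γ φ → IsStConjK Γ ψ →
      IsBasisConj Γ (ψ⁻¹ * φ * ψ)) ∧
    (∀ φ : MulAut (RAAG Γ), IsStL Γ φ ↔ IsStK Γ φ) := by
  have hbot : Subgroup.closure (LInnSSet Γ) = ⊥ := by
    rw [LInnSSet_eq_empty hdom, Subgroup.closure_empty]
  refine ⟨fun φ => ?_, hbot, fun φ => ⟨(·.isConjV hdom), (·.1)⟩,
    fun φ => ⟨(·.isConjN hdom), (·.1)⟩,
    fun φ ψ hφ hψ => (hφ.isConjN hdom).isBasisConj_conj_of_isStConjK hψ,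
    fun φ => isStL_iff_isStK hdom⟩
  rw [hbot, Subgroup.mem_bot]
  exact isBasisConj_and_isStK_iff hdom

end PCG
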